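/- Let S > 0, let U ⊆ (0,S] be Lebesgue measurable, set β(s) := Leb(U ∩ [0,s]), R := β(S), and α(r) := min{s ∈ [0,S] : β(s) = r}. Then for every Borel measurable function g : ℝ → [0,∞] one has the change-of-variables formula ∫_U g(σ) dσ = ∫_{[0,R]} g(α(r)) dr, where both integrals are Lebesgue integrals (with values in [0,∞]). (Equation (5.22) in the proof of Lemma 5.12.) -/

import Mathlib

open MeasureTheory

/-- The function `β(s) := Leb(U ∩ [0,s])`. -/
noncomputable def betaFun (U : Set ℝ) (s : ℝ) : ℝ :=
  (volume (U ∩ Set.Icc 0 s)).toReal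

/-- The "right inverse" `α(r) := min{s ∈ [0,S] : β(s) = r}`. -/
noncomputable def alphaFun (U : Set ℝ) (S : ℝ) (r : ℝ) : ℝ :=
  sInf {s : ℝ | s ∈ Set.Icc 0 S ∧ betaFun U s = r}

/-!
Since `β` is continuous and monotone, `α` picks a point of each level set of `β` and satisfies
`α r ≤ t ↔ r ≤ β t`. Hence the image of Lebesgue measure on `[0, R]` under `α` gives
`(-∞, t]` the mass `β t = Leb (U ∩ (-∞, t])`, so it is Lebesgue measure restricted to `U`, and the
formula is the change of variables for this pushforward.
-/

open Set

section LevelSet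

variable {f : ℝ → ℝ} {a b r : ℝ}

theorem csInf_Icc_levelSet_mem (hf : Continuous f) (hab : a ≤ b) (hr : r ∈ Icc (f a) (f b)) :
    sInf {s | s ∈ Icc a b ∧ f s = r} ∈ {s | s ∈ Icc a b ∧ f s = r} := by
  obtain ⟨s, hs, hfs⟩ := intermediate_value_Icc hab hf.continuousOn hr
  exact IsClosed.csInf_mem (isClosed_Icc.inter (isClosed_singleton.preimage hf))
    ⟨s, hs, hfs⟩ ⟨a, fun x hx => hx.1.1⟩

theorem csInf_Icc_levelSet_le_iff (hf : Continuous f) (hmono : Monotone f) (hab : a ≤ b)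
    (hr : r ∈ Icc (f a) (f b)) {t : ℝ} (ht : a ≤ t) :
    sInf {s | s ∈ Icc a b ∧ f s = r} ≤ t ↔ r ≤ f t := by
  obtain ⟨-, hfr⟩ := csInf_Icc_levelSet_mem hf hab hr
  refine ⟨fun h => hfr ▸ hmono h, fun h => ?_⟩
  have hr' : r ∈ Icc (f a) (f (min t b)) := ⟨hr.1, hmono.map_min ▸ le_min h hr.2⟩
  obtain ⟨s, hs, hfs⟩ := intermediate_value_Icc (le_min ht hab) hf.continuousOn hr'
  calc sInf {s | s ∈ Icc a b ∧ f s = r} ≤ s :=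
        csInf_le ⟨a, fun x hx => hx.1.1⟩ ⟨⟨hs.1, hs.2.trans (min_le_right t b)⟩, hfs⟩
    _ ≤ t := hs.2.trans (min_le_left t b)

end LevelSet

section Beta

variable {U : Set ℝ}

theorem volume_inter_Icc_ne_top (U : Set ℝ) (s : ℝ) : volume (U ∩ Icc 0 s) ≠ ⊤ :=
  measure_ne_top_of_subset inter_subset_right (by simp [Real.volume_Icc])

theorem betaFun_zero (U : Set ℝ) : betaFun U 0 = 0 := by
  simp [betaFun, measure_mono_null inter_subset_right (measure_singleton (0 : ℝ))]

theorem betaFun_mono (U : Set ℝ) : Monotone (betaFun U) := fun _ t hst =>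
  ENNReal.toReal_mono (volume_inter_Icc_ne_top U t)
    (measure_mono (inter_subset_inter_right U (Icc_subset_Icc le_rfl hst)))

theorem betaFun_le_add_sub (U : Set ℝ) {s t : ℝ} (hst : s ≤ t) :
    betaFun U t ≤ betaFun U s + (t - s) := by
  have hsub : U ∩ Icc 0 t ⊆ (U ∩ Icc 0 s) ∪ Ioc s t := by
    rintro x ⟨hxU, hx0, hxt⟩
    by_cases hxs : x ≤ s
    · exact Or.inl ⟨hxU, hx0, hxs⟩
    · exact Or.inr ⟨lt_of_not_ge hxs, hxt⟩
  have hvol : volume (U ∩ Icc 0 t) ≤ volume (U ∩ Icc 0 s) + ENNReal.ofReal (t - s) :=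
    (measure_mono hsub).trans ((measure_union_le _ _).trans_eq (by rw [Real.volume_Ioc]))
  have := ENNReal.toReal_mono (by simp [volume_inter_Icc_ne_top]) hvol
  rwa [ENNReal.toReal_add (volume_inter_Icc_ne_top U s) ENNReal.ofReal_ne_top,
    ENNReal.toReal_ofReal (sub_nonneg.2 hst)] at this

theorem betaFun_lipschitzWith (U : Set ℝ) : LipschitzWith 1 (betaFun U) := by
  refine LipschitzWith.of_le_add fun s t => ?_
  rcases le_total s t with hst | hts
  · exact (betaFun_mono U hst).trans (le_add_of_nonneg_right dist_nonneg)
  · simpa [Real.dist_eq, abs_of_nonneg (sub_nonneg.2 hts)] using betaFun_le_add_sub U hts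

theorem betaFun_continuous (U : Set ℝ) : Continuous (betaFun U) :=
  (betaFun_lipschitzWith U).continuous

theorem betaFun_le_betaFun_of_subset_Icc {S : ℝ} (hUS : U ⊆ Icc 0 S) (t : ℝ) :
    betaFun U t ≤ betaFun U S := by
  refine ENNReal.toReal_mono (volume_inter_Icc_ne_top U S) (measure_mono ?_)
  rw [inter_eq_left.2 hUS]
  exact inter_subset_left

theorem ofReal_betaFun (hU : U ⊆ Ioi 0) (t : ℝ) :
    ENNReal.ofReal (betaFun U t) = volume (U ∩ Iic t) := by
  have hUt : U ∩ Icc 0 t = U ∩ Iic t := by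
    ext x
    exact ⟨fun ⟨hxU, _, hxt⟩ => ⟨hxU, hxt⟩, fun ⟨hxU, hxt⟩ => ⟨hxU, (hU hxU).le, hxt⟩⟩
  rw [betaFun, ENNReal.ofReal_toReal (volume_inter_Icc_ne_top U t), hUt]

end Beta

section Alpha

variable {U : Set ℝ} {S r : ℝ}

theorem alphaFun_mem_levelSet (hS : 0 ≤ S) (hr : r ∈ Icc 0 (betaFun U S)) :
    alphaFun U S r ∈ {s | s ∈ Icc 0 S ∧ betaFun U s = r} :=
  csInf_Icc_levelSet_mem (betaFun_continuous U) hS (by rwa [betaFun_zero])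

theorem alphaFun_le_iff (hS : 0 ≤ S) (hr : r ∈ Icc 0 (betaFun U S)) {t : ℝ} (ht : 0 ≤ t) :
    alphaFun U S r ≤ t ↔ r ≤ betaFun U t :=
  csInf_Icc_levelSet_le_iff (betaFun_continuous U) (betaFun_mono U) hS (by rwa [betaFun_zero]) ht

theorem alphaFun_monotoneOn (hS : 0 ≤ S) :
    MonotoneOn (alphaFun U S) (Icc 0 (betaFun U S)) := by
  intro r hr r' hr' hrr'
  obtain ⟨hmem', hβ'⟩ := alphaFun_mem_levelSet hS hr'
  exact (alphaFun_le_iff hS hr hmem'.1).2 (hβ'.symm ▸ hrr')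

theorem preimage_alphaFun_Iic_inter_Icc (hS : 0 ≤ S) (hUS : U ⊆ Icc 0 S) {t : ℝ} (ht : 0 ≤ t) :
    alphaFun U S ⁻¹' Iic t ∩ Icc 0 (betaFun U S) = Icc 0 (betaFun U t) := by
  ext r
  constructor
  · rintro ⟨hαr, hr⟩
    exact ⟨hr.1, (alphaFun_le_iff hS hr ht).1 hαr⟩
  · rintro ⟨hr0, hrt⟩
    have hr : r ∈ Icc 0 (betaFun U S) :=
      ⟨hr0, hrt.trans (betaFun_le_betaFun_of_subset_Icc hUS t)⟩
    exact ⟨(alphaFun_le_iff hS hr ht).2 hrt, hr⟩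

theorem aemeasurable_alphaFun (hS : 0 ≤ S) :
    AEMeasurable (alphaFun U S) (volume.restrict (Icc 0 (betaFun U S))) :=
  aemeasurable_restrict_of_monotoneOn measurableSet_Icc (alphaFun_monotoneOn hS)

theorem map_alphaFun_volume_restrict (hS : 0 ≤ S) (hU : U ⊆ Ioc 0 S) :
    (volume.restrict (Icc 0 (betaFun U S))).map (alphaFun U S) = volume.restrict U := by
  refine Measure.ext_of_Iic _ _ fun t => ?_
  rw [Measure.map_apply_of_aemeasurable (aemeasurable_alphaFun hS) measurableSet_Iic,
    Measure.restrict_apply' measurableSet_Icc, Measure.restrict_apply measurableSet_Iic,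
    inter_comm (Iic t), ← ofReal_betaFun fun x hx => (hU hx).1]
  rcases lt_or_ge t 0 with ht | ht
  · have hempty : alphaFun U S ⁻¹' Iic t ∩ Icc 0 (betaFun U S) = ∅ :=
      eq_empty_of_forall_notMem fun r ⟨hαr, hr⟩ =>
        ht.not_ge ((alphaFun_mem_levelSet hS hr).1.1.trans hαr)
    rw [hempty, betaFun, Icc_eq_empty ht.not_ge]
    simp
  · rw [preimage_alphaFun_Iic_inter_Icc hS (hU.trans Ioc_subset_Icc_self) ht, Real.volume_Icc,
      sub_zero]

end Alpha

theorem change_of_variables_alpha_general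
    (S : ℝ) (hS : 0 < S) (U : Set ℝ)
    (hUsub : U ⊆ Set.Ioc 0 S)
    (g : ℝ → ENNReal) (hg : Measurable g) :
    ∫⁻ σ in U, g σ = ∫⁻ r in Set.Icc (0:ℝ) (betaFun U S), g (alphaFun U S r) := by
  rw [← map_alphaFun_volume_restrict hS.le hUsub,
    lintegral_map' hg.aemeasurable (aemeasurable_alphaFun hS.le)]

/-- Change-of-variables formula (equation (5.22) in the proof of Lemma 5.12):
for every Borel function `g : ℝ → [0,∞]`, `∫_U g(σ) dσ = ∫_{[0,R]} g(α(r)) dr`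
with `R = β(S)`. -/
theorem change_of_variables_alpha
    (S : ℝ) (hS : 0 < S) (U : Set ℝ) (hU : MeasurableSet U)
    (hUsub : U ⊆ Set.Ioc 0 S)
    (g : ℝ → ENNReal) (hg : Measurable g) :
    ∫⁻ σ in U, g σ = ∫⁻ r in Set.Icc (0:ℝ) (betaFun U S), g (alphaFun U S r) :=
  change_of_variables_alpha_general S hS U hUsub g hg
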